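/- Let S be a numerical semigroup and suppose (a_0,…,a_g) and (a'_0,…,a'_g) are two arrangements of the same positive integers (one is a permutation of the other) such that S = ⟨a_0,…,a_g⟩ is free for both arrangements; let n_i (resp. n'_i) be the quotients e_{i-1}/e_i computed from the first (resp. second) arrangement. Then ∏_{i=1}^{g} (1 − t^{n_i·a_i}) = ∏_{i=1}^{g} (1 − t^{n'_i·a'_i}) as polynomials in ℤ[t]. -/

import Mathlib

/-- `eSeq a i = gcd(a 0, …, a i)`. -/
def eSeq (a : ℕ → ℕ) : ℕ → ℕ
  | 0 => a 0
  | i + 1 => Nat.gcd (eSeq a i) (a (i + 1))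

/-- `nSeq a i = e_{i-1} / e_i` (intended for `1 ≤ i`). -/
def nSeq (a : ℕ → ℕ) (i : ℕ) : ℕ := eSeq a (i - 1) / eSeq a i

/-- `gen a i = ⟨a 0, …, a i⟩`, the set of all ℕ-linear combinations. -/
def gen (a : ℕ → ℕ) (i : ℕ) : Set ℕ :=
  {s | ∃ c : ℕ → ℕ, s = ∑ j ∈ Finset.range (i + 1), c j * a j}

/-- The semigroup `S = ⟨a 0, …, a g⟩` is free for the arrangement `(a 0, …, a g)`. -/
def IsFreeArr (a : ℕ → ℕ) (g : ℕ) : Prop :=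
  eSeq a g = 1 ∧ ∀ i, 1 ≤ i → i ≤ g → nSeq a i * a i ∈ gen a (i - 1)


/-!
For a free arrangement every element of `⟨a₀, …, a_{k+1}⟩` is uniquely `s + c·a_{k+1}` with
`s ∈ ⟨a₀, …, a_k⟩` and `c < n_{k+1}`: existence because `n_{k+1}·a_{k+1} ∈ ⟨a₀, …, a_k⟩`,
uniqueness because `e_k ∣ (c' - c)·a_{k+1}` forces `n_{k+1} = e_k / gcd(e_k, a_{k+1}) ∣ c' - c`.
Hence the generating series `H_S(t) = ∑_{s ∈ S} t^s` satisfies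
`H_S(t) · ∏_{i=0}^{g} (1 - t^{a_i}) = ∏_{i=1}^{g} (1 - t^{n_i a_i})`. The left side only depends on
`S` and on the multiset of generators, so the right sides for the two arrangements agree.
-/

open Finset PowerSeries

section Generators

variable {a : ℕ → ℕ} {k : ℕ}

lemma gen_eq_closure (a : ℕ → ℕ) (k : ℕ) :
    gen a k = (AddSubmonoid.closure (Set.range fun i : Fin (k + 1) => a i) : Set ℕ) := by
  ext s
  simp only [gen, Set.mem_ofPred_eq, SetLike.mem_coe,
    AddSubmonoid.mem_closure_range_iff_of_fintype, smul_eq_mul]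
  constructor
  · rintro ⟨c, rfl⟩
    exact ⟨fun i => c i, (Fin.sum_univ_eq_sum_range (fun j => c j * a j) _).symm⟩
  · rintro ⟨c, rfl⟩
    refine ⟨fun j => if h : j < k + 1 then c ⟨j, h⟩ else 0, ?_⟩
    rw [← Fin.sum_univ_eq_sum_range (fun j => (if h : j < k + 1 then c ⟨j, h⟩ else 0) * a j)]
    simp [Fin.is_le]

lemma gen_eq_of_perm {g : ℕ} {a' : ℕ → ℕ} (σ : Equiv.Perm (Fin (g + 1)))
    (hσ : ∀ i : Fin (g + 1), a' i = a (σ i)) : gen a' g = gen a g := by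
  have hrange : (Set.range fun i : Fin (g + 1) => a' i) = Set.range fun i : Fin (g + 1) => a i := by
    simp_rw [hσ]
    exact σ.surjective.range_comp (fun i : Fin (g + 1) => a i)
  rw [gen_eq_closure, gen_eq_closure, hrange]

lemma add_mem_gen {s t : ℕ} (hs : s ∈ gen a k) (ht : t ∈ gen a k) : s + t ∈ gen a k := by
  rw [gen_eq_closure] at *
  exact add_mem hs ht

lemma mul_mem_gen (q : ℕ) {s : ℕ} (hs : s ∈ gen a k) : q * s ∈ gen a k := by
  rw [gen_eq_closure] at *
  exact AddSubmonoid.nsmul_mem _ hs q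

lemma mem_gen_succ_iff {m : ℕ} :
    m ∈ gen a (k + 1) ↔ ∃ s ∈ gen a k, ∃ c, m = s + c * a (k + 1) := by
  constructor
  · rintro ⟨c, rfl⟩
    exact ⟨_, ⟨c, rfl⟩, c (k + 1), Finset.sum_range_succ _ _⟩
  · rintro ⟨_, ⟨d, rfl⟩, c, rfl⟩
    refine ⟨Function.update d (k + 1) c, ?_⟩
    rw [Finset.sum_range_succ _ (k + 1), Function.update_self]
    congr 1
    refine Finset.sum_congr rfl fun j hj => ?_
    rw [Function.update_of_ne (by simp at hj; omega)]

lemma gen_zero (a : ℕ → ℕ) : gen a 0 = {m | a 0 ∣ m} := by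
  ext m
  simp only [gen, zero_add, range_one, sum_singleton, Set.mem_ofPred_eq,
    dvd_iff_exists_eq_mul_left]
  exact ⟨fun ⟨c, h⟩ => ⟨c 0, h⟩, fun ⟨c, h⟩ => ⟨fun _ => c, h⟩⟩

lemma eSeq_dvd_apply {j : ℕ} (hj : j ≤ k) : eSeq a k ∣ a j := by
  induction k with
  | zero =>
    obtain rfl : j = 0 := by omega
    exact dvd_rfl
  | succ k ih =>
    rcases hj.lt_or_eq with hj | rfl
    · exact (Nat.gcd_dvd_left _ _).trans (ih (by omega))
    · exact Nat.gcd_dvd_right _ _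

lemma eSeq_dvd_of_mem_gen {s : ℕ} (hs : s ∈ gen a k) : eSeq a k ∣ s := by
  obtain ⟨c, rfl⟩ := hs
  exact Finset.dvd_sum fun j hj => (eSeq_dvd_apply (by simp at hj; omega)).mul_left _

lemma eSeq_pos (ha0 : 0 < a 0) : ∀ k, 0 < eSeq a k
  | 0 => ha0
  | k + 1 => Nat.gcd_pos_of_pos_left _ (eSeq_pos ha0 k)

lemma nSeq_succ (a : ℕ → ℕ) (k : ℕ) : nSeq a (k + 1) = eSeq a k / (eSeq a k).gcd (a (k + 1)) := rfl

lemma nSeq_succ_pos (ha0 : 0 < a 0) : 0 < nSeq a (k + 1) :=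
  Nat.div_pos (Nat.le_of_dvd (eSeq_pos ha0 k) (Nat.gcd_dvd_left _ _))
    (Nat.gcd_pos_of_pos_left _ (eSeq_pos ha0 k))

end Generators

lemma Nat.div_gcd_dvd_of_dvd_mul {e A d : ℕ} (he : 0 < e) (h : e ∣ d * A) : e / e.gcd A ∣ d := by
  have hg : 0 < e.gcd A := Nat.gcd_pos_of_pos_left _ he
  refine (Nat.coprime_div_gcd_div_gcd hg).dvd_of_dvd_mul_right ?_
  rw [← Nat.mul_div_assoc d (Nat.gcd_dvd_right e A)]
  exact Nat.div_dvd_div (Nat.gcd_dvd_left e A) h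

section Decomposition

variable {a : ℕ → ℕ} {k : ℕ}

lemma exists_lt_nSeq_of_mem_gen_succ (ha0 : 0 < a 0)
    (hfree : nSeq a (k + 1) * a (k + 1) ∈ gen a k) {m : ℕ} (hm : m ∈ gen a (k + 1)) :
    ∃ c < nSeq a (k + 1), ∃ s ∈ gen a k, m = s + c * a (k + 1) := by
  obtain ⟨s, hs, c, rfl⟩ := mem_gen_succ_iff.1 hm
  set n := nSeq a (k + 1)
  refine ⟨c % n, Nat.mod_lt _ (nSeq_succ_pos ha0), s + c / n * (n * a (k + 1)),
    add_mem_gen hs (mul_mem_gen _ hfree), ?_⟩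
  conv_lhs => rw [← Nat.div_add_mod c n]
  ring

lemma eq_of_add_mul_eq_add_mul {s s' c c' : ℕ} (hs : s ∈ gen a k) (hs' : s' ∈ gen a k)
    (hc : c < nSeq a (k + 1)) (hc' : c' < nSeq a (k + 1))
    (h : s + c * a (k + 1) = s' + c' * a (k + 1)) : c = c' := by
  wlog hle : c ≤ c' generalizing s s' c c'
  · exact (this hs' hs hc' hc h.symm (by omega)).symm
  have he : 0 < eSeq a k := Nat.pos_of_ne_zero fun he => by simp [nSeq_succ, he] at hc
  have hsub : s = s' + (c' - c) * a (k + 1) := by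
    have : c' * a (k + 1) = c * a (k + 1) + (c' - c) * a (k + 1) := by
      rw [← add_mul, Nat.add_sub_cancel' hle]
    omega
  have hdvd : nSeq a (k + 1) ∣ c' - c := by
    refine Nat.div_gcd_dvd_of_dvd_mul he ?_
    exact (Nat.dvd_add_iff_right (eSeq_dvd_of_mem_gen hs')).2 (hsub ▸ eSeq_dvd_of_mem_gen hs)
  have := Nat.eq_zero_of_dvd_of_lt hdvd (by omega)
  omega

end Decomposition

noncomputable def charSeries (S : Set ℕ) : PowerSeries ℤ := PowerSeries.mk (S.indicator 1)

lemma coeff_charSeries (S : Set ℕ) (m : ℕ) : coeff m (charSeries S) = S.indicator 1 m :=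
  coeff_mk _ _

lemma coeff_charSeries_mul_X_pow (S : Set ℕ) (A m : ℕ) :
    coeff m (charSeries S * X ^ A) = {m | A ≤ m ∧ m - A ∈ S}.indicator 1 m := by
  rw [coeff_mul_X_pow', coeff_charSeries]
  classical
  by_cases hA : A ≤ m <;> simp [Set.indicator_apply, hA]

lemma charSeries_eq_mul_geom_sum {T U : Set ℕ} {A n : ℕ}
    (hU : ∀ m, m ∈ U ↔ ∃ c < n, ∃ s ∈ T, m = s + c * A)
    (hunique : ∀ {s s' c c'}, s ∈ T → s' ∈ T → c < n → c' < n → s + c * A = s' + c' * A → c = c') :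
    charSeries U = charSeries T * ∑ c ∈ range n, (X ^ A) ^ c := by
  ext m
  simp only [mul_sum, map_sum, ← pow_mul, coeff_charSeries_mul_X_pow, coeff_charSeries]
  have hterm : ∀ c, m ∈ {m | A * c ≤ m ∧ m - A * c ∈ T} ↔ ∃ s ∈ T, m = s + c * A := by
    intro c
    constructor
    · rintro ⟨hle, hs⟩
      exact ⟨_, hs, by rw [Nat.mul_comm c A]; omega⟩
    · rintro ⟨s, hs, rfl⟩
      exact ⟨by rw [Nat.mul_comm A c]; omega, by rwa [Nat.mul_comm A c, Nat.add_sub_cancel]⟩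
  by_cases hm : m ∈ U
  · obtain ⟨c₀, hc₀, s₀, hs₀, rfl⟩ := (hU _).1 hm
    rw [Set.indicator_of_mem hm, sum_eq_single_of_mem c₀ (mem_range.2 hc₀),
      Set.indicator_of_mem ((hterm c₀).2 ⟨s₀, hs₀, rfl⟩)]
    intro c hc hne
    refine Set.indicator_of_notMem (fun h => hne ?_) _
    obtain ⟨s, hs, heq⟩ := (hterm c).1 h
    exact hunique hs hs₀ (mem_range.1 hc) hc₀ heq.symm
  · rw [Set.indicator_of_notMem hm]
    refine (sum_eq_zero fun c hc => Set.indicator_of_notMem (fun h => hm ?_) _).symm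
    exact (hU m).2 ⟨c, mem_range.1 hc, (hterm c).1 h⟩

lemma charSeries_setOf_dvd_mul_one_sub_X_pow {A : ℕ} (hA : 0 < A) :
    charSeries {m | A ∣ m} * (1 - X ^ A) = 1 := by
  ext m
  rw [mul_one_sub, map_sub, coeff_charSeries_mul_X_pow, coeff_charSeries, coeff_one]
  rcases Nat.eq_zero_or_pos m with rfl | hm
  · simp [hA.ne']
  · have : (A ≤ m ∧ A ∣ m - A) ↔ A ∣ m := by
      refine ⟨fun ⟨hle, hd⟩ => ?_, fun hd => ⟨Nat.le_of_dvd hm hd, Nat.dvd_sub hd dvd_rfl⟩⟩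
      simpa [Nat.sub_add_cancel hle] using dvd_add hd (dvd_refl A)
    simp only [Set.indicator_apply, Set.mem_ofPred_eq, this, hm.ne', if_false, sub_self]

section Hilbert

variable {a : ℕ → ℕ}

lemma charSeries_gen_succ {k : ℕ} (ha0 : 0 < a 0)
    (hfree : nSeq a (k + 1) * a (k + 1) ∈ gen a k) :
    charSeries (gen a (k + 1)) =
      charSeries (gen a k) * ∑ c ∈ range (nSeq a (k + 1)), (X ^ a (k + 1)) ^ c := by
  refine charSeries_eq_mul_geom_sum (fun m => ⟨exists_lt_nSeq_of_mem_gen_succ ha0 hfree, ?_⟩)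
    eq_of_add_mul_eq_add_mul
  rintro ⟨c, -, s, hs, rfl⟩
  exact mem_gen_succ_iff.2 ⟨s, hs, c, rfl⟩

lemma charSeries_gen_mul_prod_one_sub_X_pow (ha0 : 0 < a 0) :
    ∀ k, (∀ i, 1 ≤ i → i ≤ k → nSeq a i * a i ∈ gen a (i - 1)) →
      charSeries (gen a k) * ∏ i ∈ range (k + 1), (1 - X ^ a i) =
        ∏ i ∈ Icc 1 k, (1 - X ^ (nSeq a i * a i))
  | 0, _ => by simp [gen_zero, charSeries_setOf_dvd_mul_one_sub_X_pow ha0]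
  | k + 1, hfree => by
    have ih := charSeries_gen_mul_prod_one_sub_X_pow ha0 k fun i hi hik => hfree i hi (by omega)
    have hgeom := geom_sum_mul_neg (X ^ a (k + 1) : PowerSeries ℤ) (nSeq a (k + 1))
    rw [← pow_mul'] at hgeom
    rw [prod_range_succ, charSeries_gen_succ (k := k) ha0 (hfree (k + 1) le_add_self le_rfl),
      mul_mul_mul_comm, ih, hgeom, prod_Icc_succ_top (by omega)]

end Hilbert

lemma prod_range_eq_of_perm {M : Type*} [CommMonoid M] (f : ℕ → M) {g : ℕ} {a a' : ℕ → ℕ}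
    (σ : Equiv.Perm (Fin (g + 1))) (hσ : ∀ i : Fin (g + 1), a' i = a (σ i)) :
    ∏ i ∈ range (g + 1), f (a' i) = ∏ i ∈ range (g + 1), f (a i) := by
  simp only [← Fin.prod_univ_eq_prod_range (fun i => f (a' i)),
    ← Fin.prod_univ_eq_prod_range (fun i => f (a i)), hσ]
  exact Equiv.prod_comp σ fun i => f (a i)

lemma Polynomial.coe_prod_one_sub_X_pow (s : Finset ℕ) (f : ℕ → ℕ) :
    ((∏ i ∈ s, (1 - Polynomial.X ^ f i) : Polynomial ℤ) : PowerSeries ℤ) =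
      ∏ i ∈ s, (1 - PowerSeries.X ^ f i) := by
  rw [← Polynomial.coeToPowerSeries.ringHom_apply, map_prod]
  simp

theorem stmt_5 (g : ℕ) (a a' : ℕ → ℕ) (hpos : ∀ i, i ≤ g → 0 < a i)
    (hperm : ∃ σ : Equiv.Perm (Fin (g + 1)), ∀ i : Fin (g + 1), a' i.val = a (σ i).val)
    (hfree : IsFreeArr a g) (hfree' : IsFreeArr a' g) :
    ∏ i ∈ Finset.Icc 1 g, (1 - (Polynomial.X : Polynomial ℤ) ^ (nSeq a i * a i)) =
      ∏ i ∈ Finset.Icc 1 g, (1 - (Polynomial.X : Polynomial ℤ) ^ (nSeq a' i * a' i)) := by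
  obtain ⟨σ, hσ⟩ := hperm
  have ha0 : 0 < a 0 := hpos 0 g.zero_le
  have ha'0 : 0 < a' 0 := hσ 0 ▸ hpos _ (Fin.is_le _)
  rw [← Polynomial.coe_inj, Polynomial.coe_prod_one_sub_X_pow, Polynomial.coe_prod_one_sub_X_pow,
    ← charSeries_gen_mul_prod_one_sub_X_pow ha0 g hfree.2,
    ← charSeries_gen_mul_prod_one_sub_X_pow ha'0 g hfree'.2, gen_eq_of_perm σ hσ,
    prod_range_eq_of_perm (fun n => 1 - X ^ n) σ hσ]
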